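/- Let α > 1 and let Ω := {x + iy ∈ ℂ : 0 < x < 1, |y| < (1−x)^α}. Then the harmonic (hence subharmonic) function φ(z) = log|z − 1| is VMO on Ω, while its Lelong number at the boundary point 1 ∈ ∂Ω equals 1, i.e., ν_φ(1) = lim_{r→0⁺}(sup_{B(1,r)} φ)/(log r) = 1. (In particular, the interior sphere condition cannot be dropped in the global equivalence between VMO and vanishing Lelong numbers.) -/

import Mathlib

open MeasureTheory Metric Filter Topology
open scoped ENNReal NNReal

noncomputable section

/-- The mean value `φ_{B(z,r)}` of `φ : ℂ → [-∞,∞)` over the ball `B(z,r)` w.r.t. Lebesgue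
measure on `ℂ`. -/
def ballAvg (φ : ℂ → EReal) (z : ℂ) (r : ℝ) : ℝ :=
  ⨍ x in ball z r, (φ x).toReal

/-- The mean oscillation `MO_{B(z,r)}(φ)`. -/
def MO (φ : ℂ → EReal) (z : ℂ) (r : ℝ) : ℝ :=
  ⨍ x in ball z r, |(φ x).toReal - ballAvg φ z r|

/-- The set of mean oscillations of `φ` over admissible balls `B(z,r)`, `z ∈ Ω`,
`0 < r ≤ (1/2) · dist(z, ∂Ω)`. -/
def moSet (φ : ℂ → EReal) (Ω : Set ℂ) : Set ℝ :=
  {m | ∃ z ∈ Ω, ∃ r : ℝ, 0 < r ∧ r ≤ (1 / 2) * infDist z (frontier Ω) ∧ m = MO φ z r}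

/-- `φ` is BMO on `Ω`: its BMO norm is finite. -/
def IsBMOOn (φ : ℂ → EReal) (Ω : Set ℂ) : Prop := BddAbove (moSet φ Ω)

/-- `φ` is VMO on `Ω`. -/
def IsVMOOn (φ : ℂ → EReal) (Ω : Set ℂ) : Prop :=
  IsBMOOn φ Ω ∧
  ∀ ε : ℝ, 0 < ε → ∃ δ : ℝ, 0 < δ ∧ ∀ z ∈ Ω, ∀ r : ℝ, 0 < r →
    r ≤ min δ ((1 / 2) * infDist z (frontier Ω)) → MO φ z r < ε

/-- The Hölder domain `Ω = {x + iy : 0 < x < 1, |y| < (1-x)^α}`. -/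
def holderDomain (α : ℝ) : Set ℂ :=
  {z : ℂ | 0 < z.re ∧ z.re < 1 ∧ |z.im| < (1 - z.re) ^ α}

/-- The function `log |z - 1|`, with value `-∞` at `z = 1`. -/
def logDist : ℂ → EReal :=
  fun z => if z = 1 then (⊥ : EReal) else ((Real.log ‖z - 1‖ : ℝ) : EReal)

/-!
On an admissible ball `B(z, r)` the ball stays at distance `≥ |z - 1| / 2` from the singularity,
so `log |· - 1|` oscillates by `O(r / |z - 1|)` there. Admissibility also forces
`r ≤ (1 - Re z)^α ≤ |z - 1|^α`, because the cusp boundary lies within `2 (1 - Re z)^α` of `z`;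
hence `r / |z - 1| ≤ r^(1 - 1/α)`, which tends to `0` with `r` precisely because `α > 1`.
The Lelong number is `1` because `sup_{B(1,r)} log |z - 1| = log r`.
-/

open Set

section MeanOscillation

variable {X : Type*} [MeasurableSpace X] {μ : Measure X} {t : Set X} {f : X → ℝ} {c ε : ℝ}

theorem abs_setAverage_sub_le (h0 : μ t ≠ 0) (ht : μ t ≠ ∞) (hf : IntegrableOn f t μ)
    (hfc : ∀ᵐ x ∂μ.restrict t, |f x - c| ≤ ε) : |(⨍ x in t, f x ∂μ) - c| ≤ ε := by
  have hmem : (⨍ x in t, f x ∂μ) ∈ closedBall c ε :=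
    (convex_closedBall c ε).set_average_mem isClosed_closedBall h0 ht
      (by simpa only [mem_closedBall, Real.dist_eq] using hfc) hf
  rwa [mem_closedBall, Real.dist_eq] at hmem

theorem setAverage_abs_sub_setAverage_le (h0 : μ t ≠ 0) (ht : μ t ≠ ∞)
    (hf : IntegrableOn f t μ) (hfc : ∀ᵐ x ∂μ.restrict t, |f x - c| ≤ ε) :
    ⨍ x in t, |f x - ⨍ y in t, f y ∂μ| ∂μ ≤ 2 * ε := by
  set A := ⨍ y in t, f y ∂μ
  have hA := abs_setAverage_sub_le h0 ht hf hfc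
  have hpt : ∀ᵐ x ∂μ.restrict t, |f x - A| ∈ Iic (2 * ε) := hfc.mono fun x hx => by
    rw [mem_Iic]
    calc |f x - A| ≤ |f x - c| + |c - A| := abs_sub_le _ _ _
      _ ≤ 2 * ε := by rw [abs_sub_comm c]; linarith
  exact (convex_Iic _).set_average_mem isClosed_Iic h0 ht hpt
    ((hf.sub (integrableOn_const ht)).abs)

end MeanOscillation

theorem Real.abs_log_sub_log_le {a b : ℝ} (ha : 0 < a) (hb : 0 < b) :
    |Real.log a - Real.log b| ≤ |a - b| / min a b := by
  have key : ∀ {u v : ℝ}, 0 < u → 0 < v → Real.log u - Real.log v ≤ |u - v| / min u v := by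
    intro u v hu hv
    calc Real.log u - Real.log v = Real.log (u / v) := (Real.log_div hu.ne' hv.ne').symm
      _ ≤ u / v - 1 := Real.log_le_sub_one_of_pos (div_pos hu hv)
      _ = (u - v) / v := by field_simp
      _ ≤ |u - v| / min u v :=
        div_le_div₀ (abs_nonneg _) (le_abs_self _) (lt_min hu hv) (min_le_right _ _)
  rw [abs_le]
  constructor
  · have := key hb ha
    rw [abs_sub_comm, min_comm] at this
    linarith
  · exact key ha hb

theorem Metric.infDist_frontier_le_dist_of_notMem {E : Type*} [NormedAddCommGroup E]
    [NormedSpace ℝ E] [FiniteDimensional ℝ E] {s : Set E} {x y : E} (hx : x ∈ s) (hy : y ∉ s) :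
    infDist x (frontier s) ≤ dist x y := by
  obtain ⟨p, hp, hxp⟩ := exists_mem_frontier_infDist_compl_eq_dist hx fun h => hy (h ▸ mem_univ y)
  calc infDist x (frontier s) ≤ dist x p := infDist_le_dist_of_mem hp
    _ = infDist x sᶜ := hxp.symm
    _ ≤ dist x y := infDist_le_dist_of_mem hy

theorem isVMOOn_of_forall_MO_le {φ : ℂ → EReal} {Ω : Set ℂ} {C : ℝ} {g : ℝ → ℝ}
    (hg : Tendsto g (𝓝[>] 0) (𝓝 0))
    (hMO : ∀ z ∈ Ω, ∀ r : ℝ, 0 < r → r ≤ (1 / 2) * infDist z (frontier Ω) →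
      MO φ z r ≤ min C (g r)) :
    IsVMOOn φ Ω := by
  refine ⟨⟨C, ?_⟩, fun ε hε => ?_⟩
  · rintro _ ⟨z, hz, r, hr, hle, rfl⟩
    exact (hMO z hz r hr hle).trans (min_le_left _ _)
  · obtain ⟨δ, hδ, hsub⟩ := mem_nhdsGT_iff_exists_Ioc_subset.1 (hg (gt_mem_nhds hε))
    refine ⟨δ, hδ, fun z hz r hr hle => ?_⟩
    calc MO φ z r ≤ g r := (hMO z hz r hr (hle.trans (min_le_right _ _))).trans (min_le_right _ _)
      _ < ε := hsub ⟨hr, hle.trans (min_le_left _ _)⟩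

theorem toReal_logDist (x : ℂ) : (logDist x).toReal = Real.log ‖x - 1‖ := by
  unfold logDist; split_ifs with h <;> simp [h]

theorem MO_logDist_le {z : ℂ} {r : ℝ} (hr : 0 < r) (h2r : 2 * r ≤ ‖z - 1‖) :
    MO logDist z r ≤ 4 * (r / ‖z - 1‖) := by
  set s := ‖z - 1‖
  have hs : 0 < s := by linarith
  have hnorm : ∀ x ∈ closedBall z r, |‖x - 1‖ - s| ≤ r ∧ s / 2 ≤ ‖x - 1‖ := fun x hx => by
    have h : |‖x - 1‖ - s| ≤ r := by
      calc |‖x - 1‖ - s| ≤ ‖(x - 1) - (z - 1)‖ := abs_norm_sub_norm_le _ _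
        _ = dist x z := by rw [sub_sub_sub_cancel_right, dist_eq_norm]
        _ ≤ r := mem_closedBall.1 hx
    exact ⟨h, by linarith [neg_abs_le (‖x - 1‖ - s)]⟩
  have hosc : ∀ x ∈ ball z r, |Real.log ‖x - 1‖ - Real.log s| ≤ 2 * (r / s) := fun x hx => by
    obtain ⟨h, hlow⟩ := hnorm x (ball_subset_closedBall hx)
    calc |Real.log ‖x - 1‖ - Real.log s| ≤ |‖x - 1‖ - s| / min ‖x - 1‖ s :=
          Real.abs_log_sub_log_le (by linarith) hs
      _ ≤ r / (s / 2) := div_le_div₀ hr.le h (by positivity) (le_min hlow (by linarith))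
      _ = 2 * (r / s) := by field_simp
  have hcont : ContinuousOn (fun x : ℂ => Real.log ‖x - 1‖) (closedBall z r) :=
    ContinuousOn.log (by fun_prop) fun x hx => by linarith [(hnorm x hx).2]
  have hint : IntegrableOn (fun x : ℂ => Real.log ‖x - 1‖) (ball z r) :=
    (hcont.integrableOn_compact (isCompact_closedBall z r)).mono_set ball_subset_closedBall
  have := setAverage_abs_sub_setAverage_le (measure_ball_pos volume z hr).ne'
    measure_ball_lt_top.ne hint (ae_restrict_of_forall_mem measurableSet_ball hosc)
  simp only [MO, ballAvg, toReal_logDist]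
  linarith

theorem one_notMem_holderDomain (α : ℝ) : (1 : ℂ) ∉ holderDomain α :=
  fun h => (lt_irrefl _) h.2.1

theorem one_mem_frontier_holderDomain (α : ℝ) : (1 : ℂ) ∈ frontier (holderDomain α) := by
  refine ⟨?_, fun h => one_notMem_holderDomain α (interior_subset h)⟩
  have hlim : Tendsto (fun t : ℝ => (t : ℂ)) (𝓝[<] 1) (𝓝 1) := by
    simpa using (Complex.continuous_ofReal.tendsto 1).mono_left nhdsWithin_le_nhds
  refine mem_closure_of_tendsto hlim ?_
  filter_upwards [Ioo_mem_nhdsLT (zero_lt_one' ℝ)] with t ht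
  exact ⟨by simpa using ht.1, by simpa using ht.2,
    by simpa using Real.rpow_pos_of_pos (sub_pos.2 ht.2) α⟩

theorem infDist_frontier_holderDomain_le {α : ℝ} {z : ℂ} (hz : z ∈ holderDomain α) :
    infDist z (frontier (holderDomain α)) ≤ min ‖z - 1‖ (2 * (1 - z.re) ^ α) := by
  have hpos : 0 < (1 - z.re) ^ α := Real.rpow_pos_of_pos (sub_pos.2 hz.2.1) α
  have hcusp : z + ((2 * (1 - z.re) ^ α : ℝ) : ℂ) * Complex.I ∉ holderDomain α := fun h => by
    have := h.2.2
    simp at this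
    linarith [neg_abs_le z.im, le_abs_self (z.im + 2 * (1 - z.re) ^ α), hz.2.2]
  refine le_min ?_ ?_
  · simpa [dist_eq_norm] using
      infDist_frontier_le_dist_of_notMem hz (one_notMem_holderDomain α)
  · simpa [dist_eq_norm, abs_of_pos hpos] using
      infDist_frontier_le_dist_of_notMem hz hcusp

theorem le_norm_sub_one_of_admissible {α : ℝ} (hα : 0 ≤ α) {z : ℂ} (hz : z ∈ holderDomain α)
    {r : ℝ} (hle : r ≤ (1 / 2) * infDist z (frontier (holderDomain α))) :
    2 * r ≤ ‖z - 1‖ ∧ r ≤ ‖z - 1‖ ^ α := by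
  have hd := le_min_iff.1 (infDist_frontier_holderDomain_le hz)
  have hre : 1 - z.re ≤ ‖z - 1‖ := by
    calc 1 - z.re ≤ |1 - z.re| := le_abs_self _
      _ = |(z - 1).re| := by rw [Complex.sub_re, Complex.one_re, abs_sub_comm]
      _ ≤ ‖z - 1‖ := Complex.abs_re_le_norm _
  refine ⟨by linarith, ?_⟩
  calc r ≤ (1 - z.re) ^ α := by linarith
    _ ≤ ‖z - 1‖ ^ α := Real.rpow_le_rpow (sub_pos.2 hz.2.1).le hre hα

theorem MO_logDist_holderDomain_le {α : ℝ} (hα : 1 < α) {z : ℂ} (hz : z ∈ holderDomain α)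
    {r : ℝ} (hr : 0 < r) (hle : r ≤ (1 / 2) * infDist z (frontier (holderDomain α))) :
    MO logDist z r ≤ min 2 (4 * r ^ (1 - α⁻¹)) := by
  obtain ⟨h2r, hrα⟩ := le_norm_sub_one_of_admissible (by linarith) hz hle
  set s := ‖z - 1‖
  have hs : 0 < s := by linarith
  have hroot : r ^ α⁻¹ ≤ s := by
    calc r ^ α⁻¹ ≤ (s ^ α) ^ α⁻¹ := Real.rpow_le_rpow hr.le hrα (by positivity)
      _ = s := Real.rpow_rpow_inv hs.le (by linarith)
  have hratio : r / s ≤ r ^ (1 - α⁻¹) := by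
    rw [Real.rpow_sub hr, Real.rpow_one]
    exact div_le_div_of_nonneg_left hr.le (by positivity) hroot
  have hhalf : r / s ≤ 1 / 2 := by rw [div_le_iff₀ hs]; linarith
  exact (MO_logDist_le hr h2r).trans (le_min (by linarith) (by linarith))

theorem iSup_logDist_ball {r : ℝ} (hr : 0 < r) :
    (⨆ z ∈ ball (1 : ℂ) r, logDist z) = ((Real.log r : ℝ) : EReal) := by
  refine le_antisymm (iSup₂_le fun z hz => ?_) ?_
  · unfold logDist
    split_ifs with h
    · exact bot_le
    · have hz' : ‖z - 1‖ < r := by rwa [← dist_eq_norm]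
      exact EReal.coe_le_coe_iff.2 (Real.log_le_log (norm_pos_iff.2 (sub_ne_zero.2 h)) hz'.le)
  · have hlim : Tendsto (fun t : ℝ => ((Real.log t : ℝ) : EReal)) (𝓝[<] r) (𝓝 (Real.log r)) :=
      ((continuous_coe_real_ereal.tendsto _).comp
        (Real.continuousAt_log hr.ne')).mono_left nhdsWithin_le_nhds
    refine le_of_tendsto hlim ?_
    filter_upwards [Ioo_mem_nhdsLT hr] with t ht
    have hnorm : ‖(1 + (t : ℂ)) - 1‖ = t := by simp [abs_of_pos ht.1]
    have hne : (1 + (t : ℂ)) ≠ 1 := by simpa using ht.1.ne'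
    have hval : logDist (1 + (t : ℂ)) = ((Real.log t : ℝ) : EReal) := by
      rw [logDist, if_neg hne, hnorm]
    exact hval ▸ le_iSup₂ (f := fun z (_ : z ∈ ball (1 : ℂ) r) => logDist z) _
      (by rw [mem_ball, dist_eq_norm, hnorm]; exact ht.2)

/-- **Example.** For `α > 1` and `Ω := {x + iy ∈ ℂ : 0 < x < 1, |y| < (1-x)^α}`, the point
`1` lies on `∂Ω`, the (subharmonic, indeed harmonic) function `φ(z) = log |z - 1|` is VMO on
`Ω`, yet its Lelong number at `1` equals `1`:
`ν_φ(1) = lim_{r→0⁺} (sup_{B(1,r)} φ) / log r = 1`.  Hence the interior sphere condition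
cannot be dropped in the global equivalence between VMO and vanishing Lelong numbers. -/
theorem isVMOOn_log_holderDomain (α : ℝ) (hα : 1 < α) :
    (1 : ℂ) ∈ frontier (holderDomain α) ∧
    IsVMOOn logDist (holderDomain α) ∧
    Tendsto (fun r : ℝ => (⨆ z ∈ ball (1 : ℂ) r, logDist z).toReal / Real.log r)
      (𝓝[>] (0 : ℝ)) (𝓝 1) := by
  have hpow : Tendsto (fun r : ℝ => 4 * r ^ (1 - α⁻¹)) (𝓝[>] 0) (𝓝 0) := by
    have hp : 0 < 1 - α⁻¹ := sub_pos.2 (inv_lt_one_of_one_lt₀ hα)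
    have := ((Real.continuousAt_rpow_const 0 _ (Or.inr hp.le)).tendsto.const_mul 4).mono_left
      (nhdsWithin_le_nhds (s := Ioi 0))
    simpa [Real.zero_rpow hp.ne'] using this
  refine ⟨one_mem_frontier_holderDomain α,
    isVMOOn_of_forall_MO_le hpow fun z hz r hr hle => MO_logDist_holderDomain_le hα hz hr hle, ?_⟩
  refine tendsto_const_nhds.congr' ?_
  filter_upwards [Ioo_mem_nhdsGT (zero_lt_one' ℝ)] with r hr
  rw [iSup_logDist_ball hr.1, EReal.toReal_coe, div_self (Real.log_neg hr.1 hr.2).ne]
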